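/- In a finite discounted MDP, for any policy π and the α-optimal policy π*, the value gap satisfies V^{π*}(s) − V^{π}(s) = α·[ D_KL(π(·|s)‖π*(·|s)) + E_{a∼π(·|s)}[D̄(π‖π*; s,a)] ] for every state s, where V^π(s) = E_{a∼π}[Q^π(s,a)] + αH^π(s) and V^{π*}(s) = α log Σ_a exp(Q^{π*}(s,a)/α). -/

import Mathlib

open Finset

variable {S A : Type*}

/-- A policy: for each state, a probability distribution over actions. -/
def IsPolicy [Fintype A] (π : S → A → ℝ) : Prop :=
  (∀ s a, 0 ≤ π s a) ∧ ∀ s, ∑ a, π s a = 1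

/-- A transition kernel: for each state-action pair, a distribution over next states. -/
def IsKernel [Fintype S] (P : S → A → S → ℝ) : Prop :=
  (∀ s a s', 0 ≤ P s a s') ∧ ∀ s a, ∑ s', P s a s' = 1

/-- Shannon entropy of a finitely supported distribution. -/
noncomputable def entH [Fintype A] (p : A → ℝ) : ℝ := -∑ a, p a * Real.log (p a)

/-- Kullback–Leibler divergence on a finite set. -/
noncomputable def KLdiv [Fintype A] (p q : A → ℝ) : ℝ := ∑ a, p a * Real.log (p a / q a)

/-- Soft (log-sum-exp) value of a Q-function at a state. -/
noncomputable def softV [Fintype A] (α : ℝ) (Q : S → A → ℝ) (s : S) : ℝ :=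
  α * Real.log (∑ a, Real.exp (Q s a / α))

/-- Q satisfies the soft Bellman equation for policy π under reward r. -/
def IsSoftQ [Fintype S] [Fintype A] (P : S → A → S → ℝ) (r : S → A → ℝ) (γ α : ℝ)
    (π : S → A → ℝ) (Q : S → A → ℝ) : Prop :=
  ∀ s a, Q s a = r s a + γ * ∑ s', P s a s' *
    ((∑ a', π s' a' * Q s' a') + α * entH (π s'))

/-- π is the softmax (α-optimal) policy of the soft Q-function Q. -/
def IsAlphaOptimal [Fintype A] (α : ℝ) (π : S → A → ℝ) (Q : S → A → ℝ) : Prop :=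
  ∀ s a, π s a = Real.exp ((Q s a - softV α Q s) / α)

/-- `EKL P π πstar n s a` = expected KL divergence `D_KL(π(·|s_{n+1}) ‖ πstar(·|s_{n+1}))`
at time `n+1` along a π-trajectory started at `(s_0, a_0) = (s, a)`. -/
noncomputable def EKL [Fintype S] [Fintype A] (P : S → A → S → ℝ)
    (π πstar : S → A → ℝ) : ℕ → S → A → ℝ
  | 0 => fun s a => ∑ s', P s a s' * KLdiv (π s') (πstar s')
  | (n+1) => fun s a => ∑ s', P s a s' * ∑ a', π s' a' * EKL P π πstar n s' a'

/-- Sequential forward KL divergence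
`D̄(π‖πstar; s,a) = Σ_{t≥1} γ^t E[D_KL(π(·|s_t)‖πstar(·|s_t))]`. -/
noncomputable def seqKL [Fintype S] [Fintype A] (P : S → A → S → ℝ)
    (π πstar : S → A → ℝ) (γ : ℝ) (s : S) (a : A) : ℝ :=
  ∑' n : ℕ, γ ^ (n + 1) * EKL P π πstar n s a

/-- `stateDist P π n s a x` = probability of being at state `x` at time `n+1` along a
π-trajectory started at `(s_0, a_0) = (s, a)`. -/
noncomputable def stateDist [Fintype S] [Fintype A] (P : S → A → S → ℝ)
    (π : S → A → ℝ) : ℕ → S → A → S → ℝ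
  | 0 => fun s a x => P s a x
  | (n+1) => fun s a x => ∑ s', stateDist P π n s a s' * ∑ a', π s' a' * P s' a' x

/-!
Write `D = Q* - Qπ` and let `T` be one step of the π-driven state-action chain. Because `π*` is
the softmax of `Q*`, `log π* = (Q* - V*)/α`, and averaging this against `π` gives
`V* - Vπ = α·D_KL(π‖π*) + E_π[D]` at every state. Substituting into the two soft Bellman
equations yields the policy-evaluation equation `D = αγ·P D_KL + γ T D`. As a Markov averaging
operator `T` has sup-norm at most one, so `1 - γT` is inverted by its Neumann series, and
`D = Σₙ (γT)ⁿ (αγ·P D_KL) = α·D̄(π‖π*)`.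
-/

theorem KLdiv_self [Fintype A] (p : A → ℝ) : KLdiv p p = 0 := by
  simp [KLdiv]

theorem sum_mul_add_entH_eq_sub_KLdiv [Fintype A] {α V : ℝ} (hα : α ≠ 0) {p q Q : A → ℝ}
    (hp : ∑ a, p a = 1) (hq : ∀ a, q a = Real.exp ((Q a - V) / α)) :
    ∑ a, p a * Q a + α * entH p = V - α * KLdiv p q := by
  have hlog : ∀ a, p a * Real.log (p a / q a) = p a * Real.log (p a) - p a * (Q a - V) / α := by
    intro a
    rcases eq_or_ne (p a) 0 with h | h
    · simp [h]
    · rw [Real.log_div h (by rw [hq]; positivity), hq, Real.log_exp]; ring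
  have hKL : KLdiv p q = ∑ a, p a * Real.log (p a) - (∑ a, p a * Q a - V) / α := by
    simp only [KLdiv, hlog, sum_sub_distrib, ← sum_div, mul_sub, ← sum_mul, hp, one_mul]
  rw [hKL, entH]
  field_simp
  ring

theorem abs_sum_mul_le_of_sum_eq_one {ι : Type*} [Fintype ι] {w f : ι → ℝ} {K : ℝ}
    (hw : ∀ i, 0 ≤ w i) (hw1 : ∑ i, w i = 1) (hf : ∀ i, |f i| ≤ K) :
    |∑ i, w i * f i| ≤ K :=
  calc |∑ i, w i * f i| ≤ ∑ i, w i * |f i| := by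
        simpa only [abs_mul, abs_of_nonneg (hw _)] using
          abs_sum_le_sum_abs (fun i => w i * f i) univ
    _ ≤ ∑ i, w i * K := sum_le_sum fun i _ => mul_le_mul_of_nonneg_left (hf i) (hw i)
    _ = K := by rw [← sum_mul, hw1, one_mul]

theorem eq_tsum_pow_apply_of_eq_add {E : Type*} [NormedAddCommGroup E] [NormedSpace ℝ E]
    [CompleteSpace E] {L : E →L[ℝ] E} (hL : ‖L‖ < 1) {x c : E} (h : x = c + L x) :
    x = ∑' n, (L ^ n) c := by
  have hc : (1 - L) x = c := sub_eq_of_eq_add h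
  calc x = ((∑' n, L ^ n) * (1 - L)) x := by rw [geom_series_mul_neg L hL]; rfl
    _ = ∑' n, (L ^ n) c := by
      rw [mul_apply_eq_comp, hc]
      exact (summable_geometric_of_norm_lt_one hL).map_tsum
        (ContinuousLinearMap.apply ℝ E c) (ContinuousLinearMap.continuous _)

section StepAverage

variable [Fintype S] [Fintype A]

/-- One step of the state-action chain: the next state is drawn from `P`, the next action
from `π`. -/
noncomputable def stepAvg (P : S → A → S → ℝ) (π : S → A → ℝ) :
    (S → A → ℝ) →L[ℝ] (S → A → ℝ) :=
  LinearMap.toContinuousLinearMap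
    { toFun := fun f s a => ∑ s', P s a s' * ∑ a', π s' a' * f s' a'
      map_add' := fun f g => by
        ext s a
        simp only [Pi.add_apply, mul_add, sum_add_distrib]
      map_smul' := fun c f => by
        ext s a
        simp only [Pi.smul_apply, smul_eq_mul, RingHom.id_apply, mul_sum]
        exact sum_congr rfl fun _ _ => sum_congr rfl fun _ _ => by ring }

theorem stepAvg_apply (P : S → A → S → ℝ) (π : S → A → ℝ) (f : S → A → ℝ) (s : S) (a : A) :
    stepAvg P π f s a = ∑ s', P s a s' * ∑ a', π s' a' * f s' a' :=
  rfl

theorem norm_stepAvg_le {P : S → A → S → ℝ} {π : S → A → ℝ} (hP : IsKernel P)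
    (hπ : IsPolicy π) : ‖stepAvg P π‖ ≤ 1 := by
  refine ContinuousLinearMap.opNorm_le_bound _ zero_le_one fun f => ?_
  have hf : ∀ s a, |f s a| ≤ ‖f‖ := fun s a =>
    (norm_le_pi_norm (f s) a).trans (norm_le_pi_norm f s)
  rw [one_mul, pi_norm_le_iff_of_nonneg (norm_nonneg f)]
  intro s
  rw [pi_norm_le_iff_of_nonneg (norm_nonneg f)]
  intro a
  rw [Real.norm_eq_abs, stepAvg_apply]
  exact abs_sum_mul_le_of_sum_eq_one (hP.1 s a) (hP.2 s a) fun s' =>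
    abs_sum_mul_le_of_sum_eq_one (hπ.1 s') (hπ.2 s') (hf s')

theorem EKL_eq_stepAvg_pow_apply (P : S → A → S → ℝ) (π πstar : S → A → ℝ) (n : ℕ) :
    EKL P π πstar n = (stepAvg P π ^ n) (EKL P π πstar 0) := by
  induction n with
  | zero => rfl
  | succ n ih => rw [pow_succ', mul_apply_eq_comp, ← ih]; rfl

end StepAverage

section SoftMDP

variable [Fintype A] {P : S → A → S → ℝ} {r : S → A → ℝ} {γ α : ℝ}
  {π πstar Qstar Qπ : S → A → ℝ}

theorem softV_eq_of_isAlphaOptimal (hα : α ≠ 0) (hπstar : IsPolicy πstar)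
    (hopt : IsAlphaOptimal α πstar Qstar) (s : S) :
    ∑ a, πstar s a * Qstar s a + α * entH (πstar s) = softV α Qstar s := by
  simpa [KLdiv_self] using sum_mul_add_entH_eq_sub_KLdiv hα (hπstar.2 s) (hopt s)

theorem softV_sub_eq_KLdiv_add (hα : α ≠ 0) (hπ : IsPolicy π)
    (hopt : IsAlphaOptimal α πstar Qstar) (s : S) :
    softV α Qstar s - (∑ a, π s a * Qπ s a + α * entH (π s)) =
      α * KLdiv (π s) (πstar s) + ∑ a, π s a * (Qstar s a - Qπ s a) := by
  have := sum_mul_add_entH_eq_sub_KLdiv hα (hπ.2 s) (hopt s)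
  simp only [mul_sub, sum_sub_distrib]
  linarith

variable [Fintype S]

theorem sub_eq_add_stepAvg (hα : α ≠ 0) (hπstar : IsPolicy πstar) (hπ : IsPolicy π)
    (hopt : IsAlphaOptimal α πstar Qstar) (hQstar : IsSoftQ P r γ α πstar Qstar)
    (hQπ : IsSoftQ P r γ α π Qπ) :
    Qstar - Qπ = (α * γ) • EKL P π πstar 0 + (γ • stepAvg P π) (Qstar - Qπ) := by
  ext s a
  have hgap : Qstar s a - Qπ s a = γ * ∑ s', P s a s' *
      (α * KLdiv (π s') (πstar s') + ∑ a', π s' a' * (Qstar s' a' - Qπ s' a')) := by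
    simp_rw [← softV_sub_eq_KLdiv_add hα hπ hopt, ← softV_eq_of_isAlphaOptimal hα hπstar hopt]
    rw [hQstar s a, hQπ s a]
    simp only [mul_sub, sum_sub_distrib]
    ring
  simp only [Pi.sub_apply, Pi.add_apply, smul_apply, Pi.smul_apply,
    smul_eq_mul, stepAvg_apply, EKL, hgap, mul_add, sum_add_distrib, mul_sum]
  congr 1
  exact sum_congr rfl fun _ _ => by ring

theorem sub_eq_mul_seqKL (hP : IsKernel P) (hγ0 : 0 ≤ γ) (hγ1 : γ < 1) (hα : α ≠ 0)
    (hπstar : IsPolicy πstar) (hπ : IsPolicy π) (hopt : IsAlphaOptimal α πstar Qstar)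
    (hQstar : IsSoftQ P r γ α πstar Qstar) (hQπ : IsSoftQ P r γ α π Qπ) (s : S) (a : A) :
    Qstar s a - Qπ s a = α * seqKL P π πstar γ s a := by
  set L := γ • stepAvg P π
  have hL : ‖L‖ < 1 := by
    rw [norm_smul, Real.norm_of_nonneg hγ0]
    nlinarith [norm_stepAvg_le hP hπ, norm_nonneg (stepAvg P π)]
  have hD := eq_tsum_pow_apply_of_eq_add hL
    (sub_eq_add_stepAvg hα hπstar hπ hopt hQstar hQπ)
  have hsum : Summable fun n => (L ^ n) ((α * γ) • EKL P π πstar 0) :=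
    (summable_geometric_of_norm_lt_one hL).map (ContinuousLinearMap.apply ℝ _ _)
      (ContinuousLinearMap.continuous _)
  have hterm : ∀ n, (L ^ n) ((α * γ) • EKL P π πstar 0) s a =
      α * (γ ^ (n + 1) * EKL P π πstar n s a) := by
    intro n
    rw [smul_pow, smul_apply, map_smul, ← EKL_eq_stepAvg_pow_apply]
    simp only [Pi.smul_apply, smul_eq_mul]
    ring
  rw [show Qstar s a - Qπ s a = (Qstar - Qπ) s a from rfl, hD, tsum_apply hsum,
    tsum_apply (Pi.summable.1 hsum s)]
  simp only [hterm, seqKL, tsum_mul_left]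

end SoftMDP

theorem stmt19_general [Fintype S] [Fintype A]
    (P : S → A → S → ℝ) (hP : IsKernel P)
    (r : S → A → ℝ) (γ α : ℝ) (hγ0 : 0 ≤ γ) (hγ1 : γ < 1) (hα : 0 < α)
    (πstar π : S → A → ℝ) (hπstar : IsPolicy πstar) (hπ : IsPolicy π)
    (Qstar : S → A → ℝ) (hQstar : IsSoftQ P r γ α πstar Qstar)
    (hopt : IsAlphaOptimal α πstar Qstar)
    (Qπ : S → A → ℝ) (hQπ : IsSoftQ P r γ α π Qπ) :
    ∀ s : S, softV α Qstar s - ((∑ a, π s a * Qπ s a) + α * entH (π s)) =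
      α * (KLdiv (π s) (πstar s) + ∑ a, π s a * seqKL P π πstar γ s a) := by
  intro s
  rw [softV_sub_eq_KLdiv_add hα.ne' hπ hopt s, mul_add, mul_sum]
  simp only [sub_eq_mul_seqKL hP hγ0 hγ1 hα.ne' hπstar hπ hopt hQstar hQπ, mul_left_comm]

theorem stmt19 [Fintype S] [Fintype A] [Nonempty A]
    (P : S → A → S → ℝ) (hP : IsKernel P)
    (r : S → A → ℝ) (γ α : ℝ) (hγ0 : 0 ≤ γ) (hγ1 : γ < 1) (hα : 0 < α)
    (πstar π : S → A → ℝ) (hπstar : IsPolicy πstar) (hπ : IsPolicy π)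
    (hsupp : ∀ s a, 0 < π s a → 0 < πstar s a)
    (Qstar : S → A → ℝ) (hQstar : IsSoftQ P r γ α πstar Qstar)
    (hopt : IsAlphaOptimal α πstar Qstar)
    (Qπ : S → A → ℝ) (hQπ : IsSoftQ P r γ α π Qπ) :
    ∀ s : S, softV α Qstar s - ((∑ a, π s a * Qπ s a) + α * entH (π s)) =
      α * (KLdiv (π s) (πstar s) + ∑ a, π s a * seqKL P π πstar γ s a) :=
  stmt19_general P hP r γ α hγ0 hγ1 hα πstar π hπstar hπ Qstar hQstar hopt Qπ hQπ
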